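/- arXiv:2605.06695 — 11 statements merged into one kernel-verified Lean document; each statement's English description precedes it below -/
import Mathlib

section
/- For any fuzzy graph Γ on a finite vertex set V with n vertices, the fuzzy Sombor index satisfies SO^μ(Γ) ≤ √2 · m_μ · (n − 1). -/
open Finset

variable {V : Type*}

/-- A fuzzy graph (with all vertex memberships 1) on a vertex set `V`:
edge memberships lie in `[0,1]`, are symmetric, and vanish on the diagonal. -/
def IsFuzzyGraph (μ : V → V → ℝ) : Prop :=
  (∀ u v, 0 ≤ μ u v) ∧ (∀ u v, μ u v ≤ 1) ∧ (∀ u v, μ u v = μ v u) ∧ ∀ v, μ v v = 0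

/-- The fuzzy degree of a vertex. -/
noncomputable def fuzzyDeg [Fintype V] (μ : V → V → ℝ) (u : V) : ℝ :=
  ∑ v, μ u v

/-- The fuzzy size `m_μ = (1/2) ∑_{u,v} μ(u,v)`. -/
noncomputable def fuzzySize [Fintype V] (μ : V → V → ℝ) : ℝ :=
  (1 / 2) * ∑ u, ∑ v, μ u v

/-- The fuzzy Sombor index, each unordered pair counted once. -/
noncomputable def fuzzySombor [Fintype V] (μ : V → V → ℝ) : ℝ :=
  (1 / 2) * ∑ u, ∑ v, μ u v * Real.sqrt (fuzzyDeg μ u ^ 2 + fuzzyDeg μ v ^ 2)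

theorem fuzzySombor_le_sqrt_two_mul_size_mul_card_sub_one [Fintype V]
    (μ : V → V → ℝ) (hΓ : IsFuzzyGraph μ) :
    fuzzySombor μ ≤ Real.sqrt 2 * fuzzySize μ * ((Fintype.card V : ℝ) - 1) := by
  classical
  obtain ⟨h0, h1, hsym, hdiag⟩ := hΓ
  set n : ℝ := (Fintype.card V : ℝ)
  have hdeg_nonneg : ∀ u, 0 ≤ fuzzyDeg μ u := fun u =>
    Finset.sum_nonneg fun v _ => h0 u v
  have hdeg_le : ∀ u : V, fuzzyDeg μ u ≤ n - 1 := by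
    intro u
    have hcard : (Fintype.card V : ℝ) ≥ 1 := by
      have : 0 < Fintype.card V := Fintype.card_pos_iff.mpr ⟨u⟩
      exact_mod_cast this
    have h1' : fuzzyDeg μ u = ∑ v ∈ Finset.univ.erase u, μ u v := by
      rw [fuzzyDeg, ← Finset.sum_erase _ (by simpa using hdiag u)]
    rw [h1']
    calc ∑ v ∈ Finset.univ.erase u, μ u v
        ≤ ∑ v ∈ Finset.univ.erase u, 1 :=
          Finset.sum_le_sum fun v _ => h1 u v
      _ = ((Finset.univ.erase u).card : ℝ) := by simp
      _ = n - 1 := by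
          rw [Finset.card_erase_of_mem (Finset.mem_univ u), Finset.card_univ]
          have : 0 < Fintype.card V := Fintype.card_pos_iff.mpr ⟨u⟩
          push_cast [Nat.cast_sub this]
          ring
  have hsqrt : ∀ u v : V, Real.sqrt (fuzzyDeg μ u ^ 2 + fuzzyDeg μ v ^ 2)
      ≤ Real.sqrt 2 * (n - 1) := by
    intro u v
    have hn1 : 0 ≤ n - 1 := le_trans (hdeg_nonneg u) (hdeg_le u)
    have h : fuzzyDeg μ u ^ 2 + fuzzyDeg μ v ^ 2 ≤ 2 * (n - 1) ^ 2 := by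
      have hu := pow_le_pow_left₀ (hdeg_nonneg u) (hdeg_le u) 2
      have hv := pow_le_pow_left₀ (hdeg_nonneg v) (hdeg_le v) 2
      nlinarith
    calc Real.sqrt (fuzzyDeg μ u ^ 2 + fuzzyDeg μ v ^ 2)
        ≤ Real.sqrt (2 * (n - 1) ^ 2) := Real.sqrt_le_sqrt h
      _ = Real.sqrt 2 * (n - 1) := by
          rw [Real.sqrt_mul (by norm_num), Real.sqrt_sq hn1]
  have key : fuzzySombor μ ≤ (1 / 2) * ∑ u, ∑ v, μ u v * (Real.sqrt 2 * (n - 1)) := by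
    apply mul_le_mul_of_nonneg_left _ (by norm_num)
    apply Finset.sum_le_sum
    intro u _
    apply Finset.sum_le_sum
    intro v _
    exact mul_le_mul_of_nonneg_left (hsqrt u v) (h0 u v)
  calc fuzzySombor μ ≤ (1 / 2) * ∑ u, ∑ v, μ u v * (Real.sqrt 2 * (n - 1)) := key
    _ = Real.sqrt 2 * fuzzySize μ * (n - 1) := by
        simp only [← Finset.sum_mul, fuzzySize]
        ring
end

section
/- Let Γ be a fuzzy graph on a nonempty finite vertex set V and let δ_μ = min_{u ∈ V} μ_u be the minimum fuzzy degree. Then SO^μ(Γ) ≥ √2 · m_μ · δ_μ. -/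
open Finset

variable {V : Type*}

theorem sqrt_two_mul_size_mul_minDeg_le_fuzzySombor [Fintype V] [Nonempty V]
    (μ : V → V → ℝ) (hΓ : IsFuzzyGraph μ) :
    Real.sqrt 2 * fuzzySize μ * (Finset.univ.inf' Finset.univ_nonempty (fuzzyDeg μ)) ≤
      fuzzySombor μ := by
  obtain ⟨h0, h1, hsym, hdiag⟩ := hΓ
  set δ := Finset.univ.inf' Finset.univ_nonempty (fuzzyDeg μ) with hδ
  have hδ0 : 0 ≤ δ := by
    obtain ⟨u, _, hu⟩ := Finset.exists_mem_eq_inf' Finset.univ_nonempty (fuzzyDeg μ)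
    rw [hδ, hu]
    exact Finset.sum_nonneg fun v _ => h0 u v
  have hδle : ∀ u : V, δ ≤ fuzzyDeg μ u := fun u =>
    Finset.inf'_le _ (Finset.mem_univ u)
  have key : ∀ u v : V, Real.sqrt 2 * δ ≤ Real.sqrt (fuzzyDeg μ u ^ 2 + fuzzyDeg μ v ^ 2) := by
    intro u v
    have h2 : Real.sqrt 2 * δ = Real.sqrt (δ ^ 2 + δ ^ 2) := by
      rw [show δ^2+δ^2 = 2*δ^2 by ring, Real.sqrt_mul (by norm_num), Real.sqrt_sq hδ0]
    rw [h2]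
    apply Real.sqrt_le_sqrt
    have hu := hδle u
    have hv := hδle v
    nlinarith
  rw [fuzzySombor, fuzzySize]
  rw [show Real.sqrt 2 * ((1:ℝ)/2 * ∑ u, ∑ v, μ u v) * δ
      = (1/2) * ∑ u, ∑ v, μ u v * (Real.sqrt 2 * δ) by
    simp_rw [Finset.mul_sum, Finset.sum_mul]; congr 1; ext u; congr 1; ext v; ring]
  apply mul_le_mul_of_nonneg_left _ (by norm_num)
  apply Finset.sum_le_sum
  intro u _
  apply Finset.sum_le_sum
  intro v _
  exact mul_le_mul_of_nonneg_left (key u v) (h0 u v)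
end

section
/- Let p ∈ (0,1] and let Γ be a fuzzy graph on n vertices in which every edge membership satisfies μ(u,v) ≤ p. Then SO^μ(Γ) ≤ (√2/2) · n · (n − 1)² · p², i.e., among all such fuzzy graphs the fuzzy Sombor index is maximized by the fuzzy complete graph with all edge memberships equal to p. -/
open Finset

variable {V : Type*}

theorem fuzzySombor_le_complete [Fintype V]
    (p : ℝ) (hp : 0 < p) (hp1 : p ≤ 1) (μ : V → V → ℝ)
    (hΓ : IsFuzzyGraph μ) (hle : ∀ u v, μ u v ≤ p) :
    fuzzySombor μ ≤
      Real.sqrt 2 / 2 * (Fintype.card V : ℝ) * ((Fintype.card V : ℝ) - 1) ^ 2 * p ^ 2 := by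
  classical
  obtain ⟨h0, h1, hsym, hdiag⟩ := hΓ
  rcases isEmpty_or_nonempty V with hV | hV
  · simp [fuzzySombor, Fintype.card_eq_zero]
  set n : ℝ := (Fintype.card V : ℝ) with hn
  have hcard : 1 ≤ Fintype.card V := Fintype.card_pos
  have hn1 : (1 : ℝ) ≤ n := by rw [hn]; exact_mod_cast hcard
  have hcast : ((Fintype.card V - 1 : ℕ) : ℝ) = n - 1 := by
    push_cast [Nat.cast_sub hcard]
    rfl
  set D : ℝ := (n - 1) * p with hD
  have hD0 : 0 ≤ D := mul_nonneg (by linarith) hp.le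
  have hdeg : ∀ u, fuzzyDeg μ u ≤ D := by
    intro u
    have : fuzzyDeg μ u = ∑ v ∈ univ.erase u, μ u v := by
      rw [fuzzyDeg, ← Finset.sum_erase (univ : Finset V) (f := fun v => μ u v) (a := u) (hdiag u)]
    rw [this]
    calc ∑ v ∈ univ.erase u, μ u v ≤ ∑ v ∈ univ.erase u, p :=
          Finset.sum_le_sum fun v _ => hle u v
      _ = D := by
          rw [Finset.sum_const, Finset.card_erase_of_mem (mem_univ u), card_univ,
            nsmul_eq_mul, hcast, hD]
  have hdeg0 : ∀ u, 0 ≤ fuzzyDeg μ u := fun u => Finset.sum_nonneg fun v _ => h0 u v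
  have hsqrt : ∀ u v, Real.sqrt (fuzzyDeg μ u ^ 2 + fuzzyDeg μ v ^ 2) ≤ Real.sqrt 2 * D := by
    intro u v
    have : fuzzyDeg μ u ^ 2 + fuzzyDeg μ v ^ 2 ≤ 2 * D ^ 2 := by
      have hu := pow_le_pow_left₀ (hdeg0 u) (hdeg u) 2
      have hv := pow_le_pow_left₀ (hdeg0 v) (hdeg v) 2
      linarith
    calc Real.sqrt (fuzzyDeg μ u ^ 2 + fuzzyDeg μ v ^ 2) ≤ Real.sqrt (2 * D ^ 2) :=
          Real.sqrt_le_sqrt this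
      _ = Real.sqrt 2 * D := by
          rw [Real.sqrt_mul (by norm_num), Real.sqrt_sq hD0]
  have hterm : ∀ u v, μ u v * Real.sqrt (fuzzyDeg μ u ^ 2 + fuzzyDeg μ v ^ 2) ≤
      (if v = u then 0 else p * (Real.sqrt 2 * D)) := by
    intro u v
    by_cases h : v = u
    · simp [h, hdiag u]
    · simp only [h, if_false]
      exact mul_le_mul (hle u v) (hsqrt u v) (Real.sqrt_nonneg _)
        hp.le
  have hsum : ∀ u, ∑ v, μ u v * Real.sqrt (fuzzyDeg μ u ^ 2 + fuzzyDeg μ v ^ 2) ≤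
      (n - 1) * (p * (Real.sqrt 2 * D)) := by
    intro u
    calc ∑ v, μ u v * Real.sqrt (fuzzyDeg μ u ^ 2 + fuzzyDeg μ v ^ 2)
        ≤ ∑ v, (if v = u then 0 else p * (Real.sqrt 2 * D)) :=
          Finset.sum_le_sum fun v _ => hterm u v
      _ = (n - 1) * (p * (Real.sqrt 2 * D)) := by
          rw [← Finset.sum_erase (univ : Finset V)
              (f := fun v => if v = u then (0:ℝ) else p * (Real.sqrt 2 * D)) (a := u) (by simp),
            Finset.sum_congr rfl (fun v hv => if_neg (Finset.ne_of_mem_erase hv)),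
            Finset.sum_const, Finset.card_erase_of_mem (mem_univ u), card_univ,
            nsmul_eq_mul, hcast]
  calc fuzzySombor μ ≤ (1/2) * ∑ _u : V, (n - 1) * (p * (Real.sqrt 2 * D)) := by
        rw [fuzzySombor]
        gcongr with u
        exact hsum u
    _ = Real.sqrt 2 / 2 * n * (n - 1) ^ 2 * p ^ 2 := by
        rw [Finset.sum_const, card_univ]
        simp only [nsmul_eq_mul, hD, ← hn]
        ring
end

section
/- Let c ∈ (0,1], let α be a real number with α > 1, and let Γ be a fuzzy graph on n vertices in which every edge membership satisfies μ(u,v) ≤ c. Then SO^μ_α(Γ) ≤ (n(n−1)/2) · (√2 · (n − 1) · c²)^α, i.e., among all such fuzzy graphs the general fuzzy Sombor index is maximized by the fuzzy complete graph with all edge memberships equal to c. -/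
open Finset

variable {V : Type*}

/-- The general fuzzy Sombor index with real exponent `α`. -/
noncomputable def fuzzySomborGen [Fintype V] (α : ℝ) (μ : V → V → ℝ) : ℝ :=
  (1 / 2) * ∑ u, ∑ v, (μ u v * Real.sqrt (fuzzyDeg μ u ^ 2 + fuzzyDeg μ v ^ 2)) ^ α

theorem fuzzySomborGen_le_complete [Fintype V]
    (c : ℝ) (hc : 0 < c) (hc1 : c ≤ 1) (α : ℝ) (hα : 1 < α) (μ : V → V → ℝ)
    (hΓ : IsFuzzyGraph μ) (hle : ∀ u v, μ u v ≤ c) :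
    fuzzySomborGen α μ ≤
      (Fintype.card V : ℝ) * ((Fintype.card V : ℝ) - 1) / 2 *
        (Real.sqrt 2 * ((Fintype.card V : ℝ) - 1) * c ^ 2) ^ α := by
  classical
  obtain ⟨h0, h1, hsym, hdiag⟩ := hΓ
  set n : ℝ := (Fintype.card V : ℝ) with hn
  rcases isEmpty_or_nonempty V with hV | hV
  · simp [fuzzySomborGen, hn]
  have hn1 : (0:ℝ) ≤ n - 1 := by
    have : 1 ≤ Fintype.card V := Fintype.card_pos
    simp only [hn, sub_nonneg]
    exact_mod_cast this
  set M : ℝ := Real.sqrt 2 * (n - 1) * c ^ 2 with hM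
  have hM0 : 0 ≤ M := by positivity
  have hα0 : 0 < α := lt_trans one_pos hα
  -- degree bound
  have hdeg0 : ∀ u, 0 ≤ fuzzyDeg μ u := fun u =>
    Finset.sum_nonneg fun v _ => h0 u v
  have hdeg : ∀ u, fuzzyDeg μ u ≤ (n - 1) * c := by
    intro u
    have h₁ : fuzzyDeg μ u ≤ ∑ v, (if v = u then (0:ℝ) else c) := by
      apply Finset.sum_le_sum
      intro v _
      by_cases h : v = u
      · simp [h, hdiag]
      · simp [h, hle u v]
    have h₂ : ∑ v, (if v = u then (0:ℝ) else c) = n * c - c := by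
      have : ∑ v, (if v = u then (0:ℝ) else c)
          = ∑ v : V, c - ∑ v, (if v = u then c else (0:ℝ)) := by
        rw [← Finset.sum_sub_distrib]
        congr 1; ext v; by_cases h : v = u <;> simp [h]
      rw [this, Finset.sum_ite_eq' Finset.univ u (fun _ => c)]
      simp [hn, mul_comm]
    linarith [h₁, h₂.le, h₂.ge]
  -- term bound
  have hterm : ∀ u v, (μ u v * Real.sqrt (fuzzyDeg μ u ^ 2 + fuzzyDeg μ v ^ 2)) ^ α
      ≤ (if u = v then 0 else M ^ α) := by
    intro u v
    by_cases h : u = v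
    · simp [h, hdiag, Real.zero_rpow (ne_of_gt hα0)]
    · simp only [h, if_false]
      apply Real.rpow_le_rpow
      · exact mul_nonneg (h0 u v) (Real.sqrt_nonneg _)
      · have hs : Real.sqrt (fuzzyDeg μ u ^ 2 + fuzzyDeg μ v ^ 2)
            ≤ Real.sqrt 2 * ((n - 1) * c) := by
          have h2 : fuzzyDeg μ u ^ 2 + fuzzyDeg μ v ^ 2 ≤ 2 * ((n - 1) * c) ^ 2 := by
            have := hdeg u; have := hdeg v
            have hu' := hdeg0 u; have hv' := hdeg0 v
            nlinarith [sq_nonneg (fuzzyDeg μ u), sq_nonneg (fuzzyDeg μ v)]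
          calc Real.sqrt (fuzzyDeg μ u ^ 2 + fuzzyDeg μ v ^ 2)
              ≤ Real.sqrt (2 * ((n - 1) * c) ^ 2) := Real.sqrt_le_sqrt h2
            _ = Real.sqrt 2 * ((n - 1) * c) := by
                rw [Real.sqrt_mul (by norm_num), Real.sqrt_sq (by positivity)]
        calc μ u v * Real.sqrt (fuzzyDeg μ u ^ 2 + fuzzyDeg μ v ^ 2)
            ≤ c * (Real.sqrt 2 * ((n - 1) * c)) := by
              apply mul_le_mul (hle u v) hs (Real.sqrt_nonneg _) hc.le
          _ = M := by rw [hM]; ring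
      · exact hα0.le
  have hsum : ∑ u, ∑ v, (μ u v * Real.sqrt (fuzzyDeg μ u ^ 2 + fuzzyDeg μ v ^ 2)) ^ α
      ≤ n * (n - 1) * M ^ α := by
    calc ∑ u, ∑ v, (μ u v * Real.sqrt (fuzzyDeg μ u ^ 2 + fuzzyDeg μ v ^ 2)) ^ α
        ≤ ∑ u : V, ∑ v : V, (if u = v then 0 else M ^ α) :=
          Finset.sum_le_sum fun u _ => Finset.sum_le_sum fun v _ => hterm u v
      _ = ∑ u : V, ((∑ v : V, M ^ α) - M ^ α) := by
          congr 1; ext u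
          rw [show (∑ v : V, (if u = v then (0:ℝ) else M ^ α))
              = ∑ v : V, (M ^ α - if u = v then M ^ α else 0) by
            congr 1; ext v; by_cases h : u = v <;> simp [h]]
          rw [Finset.sum_sub_distrib, Finset.sum_ite_eq Finset.univ u (fun _ => M ^ α)]
          simp
      _ = n * (n - 1) * M ^ α := by
          rw [Finset.sum_const, Finset.sum_const]
          simp [hn]; ring
  unfold fuzzySomborGen
  have := hsum
  rw [hM] at this
  linarith
end

section
/- Let n ≥ 2 and p ∈ (0,1], and let K_n^f be the fuzzy complete graph on n vertices with all edge memberships equal to p, so that its fuzzy size is m_μ = n(n−1)p/2. Then √2 · m_μ² / (n − 1) ≤ SO^μ(K_n^f) ≤ (√2/2) · n · (n − 1)² · p². -/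
open Finset

variable {V : Type*}

theorem fuzzySombor_complete_bounds [Fintype V] [DecidableEq V] (hn : 2 ≤ Fintype.card V)
    (p : ℝ) (hp : 0 < p) (hp1 : p ≤ 1) (μ : V → V → ℝ)
    (hμ : ∀ u v, μ u v = if u = v then 0 else p) :
    Real.sqrt 2 * fuzzySize μ ^ 2 / ((Fintype.card V : ℝ) - 1) ≤ fuzzySombor μ ∧
      fuzzySombor μ ≤
        Real.sqrt 2 / 2 * (Fintype.card V : ℝ) * ((Fintype.card V : ℝ) - 1) ^ 2 * p ^ 2 := by
  classical
  set n : ℝ := (Fintype.card V : ℝ) with hn'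
  have hn2 : (2:ℝ) ≤ n := by rw [hn']; exact_mod_cast hn
  have hdeg : ∀ u : V, fuzzyDeg μ u = (n - 1) * p := by
    intro u
    unfold fuzzyDeg
    have h1 : ∀ v : V, μ u v = p - (if u = v then p else 0) := by
      intro v; rw [hμ]; split <;> ring
    rw [Finset.sum_congr rfl (fun v _ => h1 v), Finset.sum_sub_distrib,
      Finset.sum_const, Finset.sum_ite_eq]
    simp [Finset.card_univ, hn']
    ring
  have hS : ∑ u, ∑ v, μ u v = n * ((n - 1) * p) := by
    have : ∀ u : V, ∑ v, μ u v = (n - 1) * p := fun u => hdeg u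
    rw [Finset.sum_congr rfl (fun u _ => this u), Finset.sum_const, Finset.card_univ]
    simp [hn']
  have hd0 : 0 ≤ (n - 1) * p := by nlinarith
  have hsqrt : Real.sqrt (((n - 1) * p) ^ 2 + ((n - 1) * p) ^ 2) =
      Real.sqrt 2 * ((n - 1) * p) := by
    rw [show ((n - 1) * p) ^ 2 + ((n - 1) * p) ^ 2 = 2 * ((n - 1) * p) ^ 2 by ring,
      Real.sqrt_mul (by norm_num), Real.sqrt_sq hd0]
  have hsom : fuzzySombor μ = Real.sqrt 2 / 2 * n * (n - 1) ^ 2 * p ^ 2 := by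
    unfold fuzzySombor
    have : ∀ u v : V, μ u v * Real.sqrt (fuzzyDeg μ u ^ 2 + fuzzyDeg μ v ^ 2) =
        μ u v * (Real.sqrt 2 * ((n - 1) * p)) := by
      intro u v; rw [hdeg, hdeg, hsqrt]
    simp_rw [this, ← Finset.sum_mul]
    rw [hS]; ring
  have hsize : fuzzySize μ = 1 / 2 * (n * ((n - 1) * p)) := by
    unfold fuzzySize; rw [hS]
  constructor
  · rw [hsom, hsize, div_le_iff₀ (by linarith)]
    have h2 : 0 < Real.sqrt 2 := Real.sqrt_pos.mpr (by norm_num)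
    nlinarith [mul_nonneg (mul_pos h2 (mul_pos hp hp)).le
      (mul_nonneg (mul_nonneg (by linarith) (sq_nonneg _)) (by linarith) : (0:ℝ) ≤ n * (n - 1) ^ 2 * (n - 2))]
  · exact hsom.le
end

section
/- Let n ≥ 2 and c ∈ (0,1], and let Γ be a fuzzy graph on n vertices whose support graph is a tree and all of whose positive edge memberships are equal to c. Then SO^μ(Γ) ≤ (n − 1) · c · √(((n − 1)c)² + c²), i.e., among such fuzzy trees the fuzzy Sombor index is maximized by the fuzzy star with all edge memberships equal to c. -/
open Finset

variable {V : Type*}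

/-- The support graph of a fuzzy graph: `u ~ v` iff `u ≠ v` and the edge membership is positive. -/
def supportGraph (μ : V → V → ℝ) : SimpleGraph V where
  Adj u v := u ≠ v ∧ 0 < μ u v ∧ 0 < μ v u
  symm := ⟨fun u v h => ⟨Ne.symm h.1, h.2.2, h.2.1⟩⟩
  loopless := ⟨fun v h => h.1 rfl⟩

private lemma no_triangle {G : SimpleGraph V} (hG : G.IsAcyclic) {u v w : V}
    (huv : G.Adj u v) (hvw : G.Adj v w) (hwu : G.Adj w u) : False := by
  have hcyc : (SimpleGraph.Walk.cons huv (SimpleGraph.Walk.cons hvw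
      (SimpleGraph.Walk.cons hwu SimpleGraph.Walk.nil))).IsCycle := by
    simp [SimpleGraph.Walk.isCycle_def, SimpleGraph.Walk.isTrail_def, Sym2.eq_iff]
    aesop
  exact hG _ hcyc

private lemma key_ineq {c : ℝ} (hc : 0 < c) {a b n : ℕ} (ha : 1 ≤ a) (hb : 1 ≤ b)
    (hab : a + b ≤ n) :
    (c * a) ^ 2 + (c * b) ^ 2 ≤ (((n : ℝ) - 1) * c) ^ 2 + c ^ 2 := by
  have hA : (1 : ℝ) ≤ a := by exact_mod_cast ha
  have hB : (1 : ℝ) ≤ b := by exact_mod_cast hb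
  have hAB : (a : ℝ) + b ≤ n := by exact_mod_cast hab
  nlinarith [sq_nonneg c, mul_nonneg (sub_nonneg.2 hA) (sub_nonneg.2 hB),
    mul_nonneg (mul_nonneg (sub_nonneg.2 hA) (sub_nonneg.2 hB)) (sq_nonneg c),
    mul_nonneg (sub_nonneg.2 (by linarith : (a : ℝ) + b - 1 ≤ (n : ℝ) - 1))
      (by linarith : (0 : ℝ) ≤ (a : ℝ) + b - 1 + ((n : ℝ) - 1)),
    mul_nonneg (mul_nonneg (sub_nonneg.2 (by linarith : (a : ℝ) + b - 1 ≤ (n : ℝ) - 1))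
      (by linarith : (0 : ℝ) ≤ (a : ℝ) + b - 1 + ((n : ℝ) - 1))) (sq_nonneg c)]

theorem fuzzySombor_tree_le_star [Fintype V] (hn : 2 ≤ Fintype.card V)
    (c : ℝ) (hc : 0 < c) (hc1 : c ≤ 1) (μ : V → V → ℝ)
    (hΓ : IsFuzzyGraph μ) (htree : (supportGraph μ).IsTree)
    (hc' : ∀ u v, 0 < μ u v → μ u v = c) :
    fuzzySombor μ ≤
      ((Fintype.card V : ℝ) - 1) * c *
        Real.sqrt ((((Fintype.card V : ℝ) - 1) * c) ^ 2 + c ^ 2) := by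
  classical
  obtain ⟨hnn, hle, hsym, hdiag⟩ := hΓ
  set G := supportGraph μ with hGdef
  set n := Fintype.card V with hndef
  set B := Real.sqrt ((((n : ℝ) - 1) * c) ^ 2 + c ^ 2) with hBdef
  have hB0 : 0 ≤ B := Real.sqrt_nonneg _
  have hadj : ∀ u v, G.Adj u v ↔ 0 < μ u v := by
    intro u v
    constructor
    · exact fun h => h.2.1
    · intro h
      refine ⟨fun he => ?_, h, by rwa [hsym v u]⟩
      rw [he, hdiag] at h; exact lt_irrefl _ h
  have hval : ∀ u v, μ u v = if G.Adj u v then c else 0 := by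
    intro u v
    by_cases h : G.Adj u v
    · simp [h, hc' u v ((hadj u v).1 h)]
    · rcases lt_or_eq_of_le (hnn u v) with h0 | h0
      · exact absurd ((hadj u v).2 h0) h
      · simp [h, ← h0]
  have hfilter : ∀ u : V, (univ.filter (G.Adj u)) = G.neighborFinset u := by
    intro u; ext w; simp [SimpleGraph.mem_neighborFinset]
  have hdeg : ∀ u, fuzzyDeg μ u = c * (G.degree u : ℝ) := by
    intro u
    rw [fuzzyDeg]
    simp_rw [hval u]
    rw [Finset.sum_ite, Finset.sum_const, Finset.sum_const_zero, add_zero,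
      hfilter u, SimpleGraph.degree]
    rw [nsmul_eq_mul, mul_comm]
  -- termwise bound
  have hterm : ∀ u v, μ u v * Real.sqrt (fuzzyDeg μ u ^ 2 + fuzzyDeg μ v ^ 2) ≤
      if G.Adj u v then c * B else 0 := by
    intro u v
    by_cases h : G.Adj u v
    · simp only [h, if_true, hval u v]
      refine mul_le_mul_of_nonneg_left ?_ hc.le
      rw [hBdef]
      apply Real.sqrt_le_sqrt
      rw [hdeg u, hdeg v]
      have ha : 1 ≤ G.degree u := by
        rw [← SimpleGraph.card_neighborFinset_eq_degree]
        exact Finset.card_pos.2 ⟨v, by simp [SimpleGraph.mem_neighborFinset, h]⟩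
      have hb : 1 ≤ G.degree v := by
        rw [← SimpleGraph.card_neighborFinset_eq_degree]
        exact Finset.card_pos.2 ⟨u, by simp [SimpleGraph.mem_neighborFinset, h.symm]⟩
      have hdisj : Disjoint (G.neighborFinset u) (G.neighborFinset v) := by
        rw [Finset.disjoint_left]
        intro w hwu hwv
        rw [SimpleGraph.mem_neighborFinset] at hwu hwv
        exact no_triangle htree.2 h hwv hwu.symm
      have hab : G.degree u + G.degree v ≤ n := by
        rw [← SimpleGraph.card_neighborFinset_eq_degree,
          ← SimpleGraph.card_neighborFinset_eq_degree,
          ← Finset.card_union_of_disjoint hdisj]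
        exact Finset.card_le_univ _
      exact key_ineq hc ha hb hab
    · simp only [h, if_false, hval u v, if_false, zero_mul, le_refl]
  -- number of edges
  have hE : ((G.edgeFinset.card : ℝ)) = (n : ℝ) - 1 := by
    have := htree.card_edgeFinset
    rw [hndef, ← this]; push_cast; ring
  calc fuzzySombor μ ≤ (1 / 2) * ∑ u, ∑ v, (if G.Adj u v then c * B else 0) := by
        rw [fuzzySombor]
        apply mul_le_mul_of_nonneg_left _ (by norm_num : (0:ℝ) ≤ 1/2)
        exact Finset.sum_le_sum fun u _ => Finset.sum_le_sum fun v _ => hterm u v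
    _ = (1 / 2) * ∑ u, (G.degree u : ℝ) * (c * B) := by
        congr 1
        refine Finset.sum_congr rfl fun u _ => ?_
        rw [Finset.sum_ite, Finset.sum_const, Finset.sum_const_zero, add_zero,
          hfilter u, SimpleGraph.degree, nsmul_eq_mul]
    _ = (1 / 2) * ((∑ u, (G.degree u : ℝ)) * (c * B)) := by
        rw [← Finset.sum_mul]
    _ = (1 / 2) * ((2 * ((n : ℝ) - 1)) * (c * B)) := by
        have := G.sum_degrees_eq_twice_card_edges
        have h2 : (∑ u, (G.degree u : ℝ)) = 2 * ((n : ℝ) - 1) := by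
          rw [← hE]
          exact_mod_cast congrArg (fun k : ℕ => (k : ℝ)) this
        rw [h2]
    _ = ((n : ℝ) - 1) * c * B := by ring
end

section
/- Let n ≥ 3 and let Γ be a fuzzy graph on vertices v_0, …, v_{n−1} whose positive edge memberships are exactly the values η_i = μ(v_i, v_{i+1 mod n}) > 0 for i = 0, …, n−1 (i.e., the support graph is the cycle C_n), with ∑_{i} η_i = m_μ. Then SO^μ(Γ) ≥ 2√2 · m_μ² / n, with equality when all η_i are equal to m_μ/n. -/
open Finset

variable {V : Type*}

theorem fuzzySombor_cycle_ge (n : ℕ) [NeZero n] (hn : 3 ≤ n)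
    (μ : Fin n → Fin n → ℝ) (hΓ : IsFuzzyGraph μ)
    (hpos : ∀ i : Fin n, 0 < μ i (i + 1))
    (hsupp : ∀ i j : Fin n, 0 < μ i j → j = i + 1 ∨ i = j + 1) :
    2 * Real.sqrt 2 * fuzzySize μ ^ 2 / (n : ℝ) ≤ fuzzySombor μ ∧
      ((∀ i : Fin n, μ i (i + 1) = fuzzySize μ / (n : ℝ)) →
        fuzzySombor μ = 2 * Real.sqrt 2 * fuzzySize μ ^ 2 / (n : ℝ)) := by
  obtain ⟨hnn, -, hsym, hdiag⟩ := hΓ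
  set η : Fin n → ℝ := fun i => μ i (i + 1) with hηdef
  have h2ne : (2 : Fin n) ≠ 0 := by
    intro h
    open Fin.NatCast in have h2 : ((2 : ℕ) : Fin n) = ((0 : ℕ) : Fin n) := by push_cast; exact h
    have h3 := congrArg Fin.val h2
    rw [Fin.val_natCast, Fin.val_natCast, Nat.mod_eq_of_lt (by omega),
      Nat.mod_eq_of_lt (by omega)] at h3
    omega
  have hne : ∀ i : Fin n, i + 1 ≠ i - 1 := by
    intro i h
    apply h2ne
    open Fin.CommRing in have h' : (i + 1) - (i - 1) = 2 := by ring
    rw [h] at h'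
    simpa using h'.symm
  have hzero : ∀ i j : Fin n, j ≠ i + 1 → i ≠ j + 1 → μ i j = 0 := by
    intro i j h1 h2
    rcases eq_or_lt_of_le (hnn i j) with h | h
    · exact h.symm
    · rcases hsupp i j h with h | h <;> [exact absurd h h1; exact absurd h h2]
  have hshift : ∀ f : Fin n → ℝ, ∑ i, f (i + 1) = ∑ i, f i := fun f =>
    Fintype.sum_equiv (Equiv.addRight 1) _ _ (fun i => rfl)
  have hrow : ∀ (g : Fin n → Fin n → ℝ), (∀ i j, μ i j = 0 → g i j = 0) →
      ∀ i, ∑ j, g i j = g i (i + 1) + g i (i - 1) := by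
    intro g hg i
    rw [← Finset.sum_subset (Finset.subset_univ ({i + 1, i - 1} : Finset (Fin n)))]
    · exact Finset.sum_pair (hne i)
    · intro j _ hj
      simp only [Finset.mem_insert, Finset.mem_singleton, not_or] at hj
      apply hg
      apply hzero i j hj.1
      intro h
      exact hj.2 (by rw [h]; exact (add_sub_cancel_right j 1).symm)
  have hμsub : ∀ i : Fin n, μ i (i - 1) = η (i - 1) := by
    intro i
    rw [hsym]
    simp [hηdef]
  have hdeg : ∀ i, fuzzyDeg μ i = η (i - 1) + η i := by
    intro i
    rw [fuzzyDeg, hrow (fun i j => μ i j) (fun _ _ h => h) i, hμsub]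
    ring
  have hsize : fuzzySize μ = ∑ i, η i := by
    rw [fuzzySize]
    have h1 : ∀ i : Fin n, ∑ j, μ i j = η i + η (i - 1) := by
      intro i; rw [hrow (fun i j => μ i j) (fun _ _ h => h) i, hμsub]
    rw [Finset.sum_congr rfl (fun i _ => h1 i), Finset.sum_add_distrib]
    rw [show ∑ i : Fin n, η (i - 1) = ∑ i : Fin n, η i from by
      rw [← hshift (fun i => η (i - 1))]; simp]
    ring
  set d : Fin n → ℝ := fuzzyDeg μ with hd
  have hsombor : fuzzySombor μ = ∑ i, η i * Real.sqrt (d i ^ 2 + d (i + 1) ^ 2) := by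
    rw [fuzzySombor]
    have h1 : ∀ i : Fin n, ∑ j, μ i j * Real.sqrt (d i ^ 2 + d j ^ 2)
        = η i * Real.sqrt (d i ^ 2 + d (i + 1) ^ 2)
          + η (i - 1) * Real.sqrt (d i ^ 2 + d (i - 1) ^ 2) := by
      intro i
      rw [hrow (fun i j => μ i j * Real.sqrt (d i ^ 2 + d j ^ 2))
        (fun _ _ h => by rw [h, zero_mul]) i, hμsub]
    rw [Finset.sum_congr rfl (fun i _ => h1 i), Finset.sum_add_distrib]
    rw [show ∑ i : Fin n, η (i - 1) * Real.sqrt (d i ^ 2 + d (i - 1) ^ 2)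
        = ∑ i : Fin n, η i * Real.sqrt (d i ^ 2 + d (i + 1) ^ 2) from by
      rw [← hshift (fun i => η (i - 1) * Real.sqrt (d i ^ 2 + d (i - 1) ^ 2))]
      apply Finset.sum_congr rfl
      intro i _
      simp only [add_sub_cancel_right]
      rw [add_comm (d (i + 1) ^ 2)]]
    ring
  have hn0 : (0 : ℝ) < n := by positivity
  constructor
  · -- the inequality
    have key1 : ∀ i : Fin n, η i * (d i + d (i + 1))
        ≤ Real.sqrt 2 * (η i * Real.sqrt (d i ^ 2 + d (i + 1) ^ 2)) := by
      intro i
      have hη : 0 ≤ η i := le_of_lt (hpos i)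
      have hab : d i + d (i + 1) ≤ Real.sqrt 2 * Real.sqrt (d i ^ 2 + d (i + 1) ^ 2) := by
        rw [← Real.sqrt_mul (by norm_num)]
        calc d i + d (i + 1) ≤ Real.sqrt ((d i + d (i + 1)) ^ 2) := by
              rw [Real.sqrt_sq_eq_abs]; exact le_abs_self _
          _ ≤ Real.sqrt (2 * (d i ^ 2 + d (i + 1) ^ 2)) := by
              apply Real.sqrt_le_sqrt; nlinarith [sq_nonneg (d i - d (i + 1))]
      calc η i * (d i + d (i + 1))
          ≤ η i * (Real.sqrt 2 * Real.sqrt (d i ^ 2 + d (i + 1) ^ 2)) :=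
            mul_le_mul_of_nonneg_left hab hη
        _ = Real.sqrt 2 * (η i * Real.sqrt (d i ^ 2 + d (i + 1) ^ 2)) := by ring
    have e1 : ∀ i : Fin n, η i * (d i + d (i + 1))
        = η i * η (i - 1) + (2 * η i ^ 2 + η i * η (i + 1)) := by
      intro i
      rw [hdeg, hdeg]
      simp only [add_sub_cancel_right]
      ring
    have e2 : ∑ i : Fin n, η i * η (i - 1) = ∑ i : Fin n, η i * η (i + 1) := by
      rw [← hshift (fun i => η i * η (i - 1))]
      apply Finset.sum_congr rfl
      intro i _
      simp only [add_sub_cancel_right]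
      ring
    have e3 : ∑ i : Fin n, (η (i + 1)) ^ 2 = ∑ i : Fin n, (η i) ^ 2 :=
      hshift (fun i => η i ^ 2)
    have hL : ∑ i, η i * (d i + d (i + 1))
        = ∑ i : Fin n, (2 * η i ^ 2 + 2 * (η i * η (i + 1))) := by
      rw [Finset.sum_congr rfl (fun i _ => e1 i), Finset.sum_add_distrib, e2,
        ← Finset.sum_add_distrib]
      exact Finset.sum_congr rfl (fun i _ => by ring)
    have hR : ∑ i : Fin n, (η i + η (i + 1)) ^ 2
        = ∑ i : Fin n, (2 * η i ^ 2 + 2 * (η i * η (i + 1))) := by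
      have h1 : ∀ i : Fin n, (η i + η (i + 1)) ^ 2
          = (η i ^ 2 + 2 * (η i * η (i + 1))) + η (i + 1) ^ 2 := fun i => by ring
      rw [Finset.sum_congr rfl (fun i _ => h1 i), Finset.sum_add_distrib, e3,
        ← Finset.sum_add_distrib]
      exact Finset.sum_congr rfl (fun i _ => by ring)
    have hA : ∑ i, η i * (d i + d (i + 1)) = ∑ i, (η i + η (i + 1)) ^ 2 :=
      hL.trans hR.symm
    have hCS : (2 * fuzzySize μ) ^ 2 ≤ (n : ℝ) * ∑ i, (η i + η (i + 1)) ^ 2 := by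
      have h1 : ∑ i : Fin n, (η i + η (i + 1)) = 2 * fuzzySize μ := by
        rw [Finset.sum_add_distrib, hshift (fun i => η i), hsize]; ring
      have h2 := sq_sum_le_card_mul_sum_sq (s := (Finset.univ : Finset (Fin n)))
        (f := fun i => η i + η (i + 1))
      rw [h1] at h2
      simpa using h2
    have hchain : (2 * fuzzySize μ) ^ 2 ≤ Real.sqrt 2 * fuzzySombor μ * n := by
      calc (2 * fuzzySize μ) ^ 2 ≤ (n : ℝ) * ∑ i, (η i + η (i + 1)) ^ 2 := hCS
        _ = (∑ i, η i * (d i + d (i + 1))) * n := by rw [hA]; ring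
        _ ≤ (∑ i, Real.sqrt 2 * (η i * Real.sqrt (d i ^ 2 + d (i + 1) ^ 2))) * n :=
            mul_le_mul_of_nonneg_right (Finset.sum_le_sum (fun i _ => key1 i))
              (le_of_lt hn0)
        _ = Real.sqrt 2 * fuzzySombor μ * n := by
            rw [hsombor, Finset.mul_sum]
    have hs2 : (0 : ℝ) < Real.sqrt 2 := Real.sqrt_pos.mpr (by norm_num)
    have hs2sq : Real.sqrt 2 * Real.sqrt 2 = 2 := Real.mul_self_sqrt (by norm_num)
    rw [div_le_iff₀ hn0]
    nlinarith [hchain, hs2, hs2sq]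
  · -- equality case
    intro heq
    have hdval : ∀ i : Fin n, d i = 2 * fuzzySize μ / n := by
      intro i
      rw [hdeg, show η (i - 1) = fuzzySize μ / n from heq (i - 1),
        show η i = fuzzySize μ / n from heq i]
      ring
    have hmpos : 0 ≤ fuzzySize μ := by
      rw [hsize]
      exact Finset.sum_nonneg (fun i _ => le_of_lt (hpos i))
    have hsqrt : ∀ i : Fin n, Real.sqrt (d i ^ 2 + d (i + 1) ^ 2)
        = Real.sqrt 2 * (2 * fuzzySize μ / n) := by
      intro i
      rw [hdval, hdval,
        show (2 * fuzzySize μ / n) ^ 2 + (2 * fuzzySize μ / n) ^ 2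
          = 2 * (2 * fuzzySize μ / n) ^ 2 from by ring,
        Real.sqrt_mul (by norm_num), Real.sqrt_sq (by positivity)]
    rw [hsombor]
    rw [Finset.sum_congr rfl (fun i _ => by
      rw [hsqrt i, show η i = fuzzySize μ / n from heq i])]
    rw [Finset.sum_const, Finset.card_univ, Fintype.card_fin, nsmul_eq_mul]
    field_simp
end

section
/- Let Γ be a regular fuzzy graph on n vertices, i.e., all fuzzy degrees μ_u are equal. Then SO^μ(Γ) ≤ √2 · ( √((2n − 2) · M₁(Γ)) · m_μ + m_μ · (n − 1) ), where M₁(Γ) = ∑_{u ∈ V} μ_u² is the first fuzzy Zagreb index. -/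
open Finset

variable {V : Type*}

/-- The first fuzzy Zagreb index. -/
noncomputable def fuzzyZagreb1 [Fintype V] (μ : V → V → ℝ) : ℝ :=
  ∑ u, fuzzyDeg μ u ^ 2

theorem fuzzySombor_regular_le [Fintype V] (μ : V → V → ℝ)
    (hΓ : IsFuzzyGraph μ) (hreg : ∀ u v : V, fuzzyDeg μ u = fuzzyDeg μ v) :
    fuzzySombor μ ≤
      Real.sqrt 2 *
        (Real.sqrt ((2 * (Fintype.card V : ℝ) - 2) * fuzzyZagreb1 μ) * fuzzySize μ +
          fuzzySize μ * ((Fintype.card V : ℝ) - 1)) := by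
  classical
  obtain ⟨h0, h1, hsym, hdiag⟩ := hΓ
  set n := (Fintype.card V : ℝ) with hn
  have hd0 : ∀ u, 0 ≤ fuzzyDeg μ u := fun u => Finset.sum_nonneg fun v _ => h0 u v
  have hdle : ∀ u : V, fuzzyDeg μ u ≤ n - 1 := by
    intro u
    have h1' : fuzzyDeg μ u = ∑ v ∈ Finset.univ.erase u, μ u v := by
      rw [fuzzyDeg, ← Finset.sum_erase Finset.univ (hdiag u)]
    rw [h1']
    calc ∑ v ∈ Finset.univ.erase u, μ u v ≤ ∑ v ∈ Finset.univ.erase u, (1:ℝ) :=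
          Finset.sum_le_sum fun v _ => h1 u v
      _ = ((Finset.univ.erase u).card : ℝ) := by simp
      _ = n - 1 := by
          rw [Finset.card_erase_of_mem (Finset.mem_univ u)]
          have hc : 1 ≤ Fintype.card V := Fintype.card_pos_iff.mpr ⟨u⟩
          rw [hn, ← Finset.card_univ, Nat.cast_sub (by simpa using hc)]
          simp
  have hm0 : 0 ≤ fuzzySize μ :=
    mul_nonneg (by norm_num) (Finset.sum_nonneg fun u _ =>
      Finset.sum_nonneg fun v _ => h0 u v)
  have key : fuzzySombor μ ≤ Real.sqrt 2 * (fuzzySize μ * (n - 1)) := by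
    have hstep : ∀ u v : V, μ u v * Real.sqrt (fuzzyDeg μ u ^ 2 + fuzzyDeg μ v ^ 2)
        ≤ μ u v * (Real.sqrt 2 * (n - 1)) := by
      intro u v
      apply mul_le_mul_of_nonneg_left _ (h0 u v)
      have hreg' : fuzzyDeg μ v = fuzzyDeg μ u := hreg v u
      rw [hreg']
      have : fuzzyDeg μ u ^ 2 + fuzzyDeg μ u ^ 2 = 2 * fuzzyDeg μ u ^ 2 := by ring
      rw [this, Real.sqrt_mul (by norm_num), Real.sqrt_sq (hd0 u)]
      exact mul_le_mul_of_nonneg_left (hdle u) (Real.sqrt_nonneg 2)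
    have hn1 : 0 ≤ n - 1 → True := fun _ => trivial
    calc fuzzySombor μ ≤ (1/2) * ∑ u, ∑ v, μ u v * (Real.sqrt 2 * (n - 1)) := by
          apply mul_le_mul_of_nonneg_left _ (by norm_num : (0:ℝ) ≤ 1/2)
          exact Finset.sum_le_sum fun u _ => Finset.sum_le_sum fun v _ => hstep u v
      _ = Real.sqrt 2 * (fuzzySize μ * (n - 1)) := by
          simp only [← Finset.sum_mul, fuzzySize]; ring
  calc fuzzySombor μ ≤ Real.sqrt 2 * (fuzzySize μ * (n - 1)) := key
    _ ≤ _ := by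
        apply mul_le_mul_of_nonneg_left _ (Real.sqrt_nonneg 2)
        have : 0 ≤ Real.sqrt ((2 * n - 2) * fuzzyZagreb1 μ) * fuzzySize μ :=
          mul_nonneg (Real.sqrt_nonneg _) hm0
        linarith
end

section
/- Let Γ be a fuzzy graph on a nonempty finite vertex set V and let Δ_μ = max_{u ∈ V} μ_u be the maximum fuzzy degree. Then SO^μ(Γ) ≤ (Δ_μ/√2) · N(Γ), where N(Γ) = ∑_{{u,v} : μ(u,v) > 0} (μ_u + μ_v)/√(μ_u μ_v) is the fuzzy Nirmala index (the sum running over unordered pairs with positive edge membership). -/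
open Finset

variable {V : Type*}

/-- The fuzzy Nirmala index, summed over unordered pairs with positive edge membership. -/
noncomputable def fuzzyNirmala [Fintype V] (μ : V → V → ℝ) : ℝ :=
  (1 / 2) * ∑ u, ∑ v,
    if 0 < μ u v then
      (fuzzyDeg μ u + fuzzyDeg μ v) / Real.sqrt (fuzzyDeg μ u * fuzzyDeg μ v)
    else 0

lemma aux_sqrt_ineq (a b Δ : ℝ) (ha : 0 < a) (hb : 0 < b) (haΔ : a ≤ Δ) (hbΔ : b ≤ Δ) :
    Real.sqrt (a ^ 2 + b ^ 2) ≤ Δ / Real.sqrt 2 * ((a + b) / Real.sqrt (a * b)) := by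
  have h2 : (0:ℝ) < Real.sqrt 2 := by positivity
  have hab : (0:ℝ) < Real.sqrt (a * b) := Real.sqrt_pos.2 (by positivity)
  rw [div_mul_div_comm, le_div_iff₀ (by positivity)]
  have e1 : Real.sqrt ((a ^ 2 + b ^ 2) * (2 * (a * b))) =
      Real.sqrt (a ^ 2 + b ^ 2) * Real.sqrt (2 * (a * b)) :=
    Real.sqrt_mul (by positivity) _
  have e2 : Real.sqrt (2 * (a * b)) = Real.sqrt 2 * Real.sqrt (a * b) :=
    Real.sqrt_mul (by norm_num) _
  have heq : Real.sqrt (a ^ 2 + b ^ 2) * (Real.sqrt 2 * Real.sqrt (a * b)) =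
      Real.sqrt ((a ^ 2 + b ^ 2) * (2 * (a * b))) := by rw [e1, e2]
  rw [heq]
  have hΔ : 0 ≤ Δ * (a + b) := by nlinarith
  rw [show Δ * (a + b) = Real.sqrt ((Δ * (a + b)) ^ 2) from (Real.sqrt_sq hΔ).symm]
  apply Real.sqrt_le_sqrt
  have h1 : a ^ 2 + b ^ 2 ≤ Δ * (a + b) := by nlinarith
  have h2' : 2 * (a * b) ≤ a ^ 2 + b ^ 2 := by nlinarith [sq_nonneg (a - b)]
  nlinarith [mul_le_mul h1 h2' (by positivity) hΔ, sq_nonneg (a + b)]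

theorem fuzzySombor_le_maxDeg_mul_nirmala [Fintype V] [Nonempty V]
    (μ : V → V → ℝ) (hΓ : IsFuzzyGraph μ) :
    fuzzySombor μ ≤
      Finset.univ.sup' Finset.univ_nonempty (fuzzyDeg μ) / Real.sqrt 2 * fuzzyNirmala μ := by
  obtain ⟨h0, h1, hsymm, hdiag⟩ := hΓ
  set Δ := Finset.univ.sup' Finset.univ_nonempty (fuzzyDeg μ) with hΔdef
  have hdle : ∀ u : V, fuzzyDeg μ u ≤ Δ := fun u => Finset.le_sup' _ (Finset.mem_univ u)
  have key : ∀ u v : V,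
      μ u v * Real.sqrt (fuzzyDeg μ u ^ 2 + fuzzyDeg μ v ^ 2) ≤
        Δ / Real.sqrt 2 *
          (if 0 < μ u v then
            (fuzzyDeg μ u + fuzzyDeg μ v) / Real.sqrt (fuzzyDeg μ u * fuzzyDeg μ v)
          else 0) := by
    intro u v
    by_cases hpos : 0 < μ u v
    · rw [if_pos hpos]
      have ha : 0 < fuzzyDeg μ u := by
        have := Finset.single_le_sum (f := fun w => μ u w) (fun w _ => h0 u w) (Finset.mem_univ v)
        exact lt_of_lt_of_le hpos this
      have hb : 0 < fuzzyDeg μ v := by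
        have := Finset.single_le_sum (f := fun w => μ v w) (fun w _ => h0 v w) (Finset.mem_univ u)
        have hvu : 0 < μ v u := by rw [← hsymm u v]; exact hpos
        exact lt_of_lt_of_le hvu this
      calc μ u v * Real.sqrt (fuzzyDeg μ u ^ 2 + fuzzyDeg μ v ^ 2)
          ≤ 1 * Real.sqrt (fuzzyDeg μ u ^ 2 + fuzzyDeg μ v ^ 2) := by
            apply mul_le_mul_of_nonneg_right (h1 u v) (Real.sqrt_nonneg _)
        _ = Real.sqrt (fuzzyDeg μ u ^ 2 + fuzzyDeg μ v ^ 2) := one_mul _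
        _ ≤ Δ / Real.sqrt 2 *
            ((fuzzyDeg μ u + fuzzyDeg μ v) / Real.sqrt (fuzzyDeg μ u * fuzzyDeg μ v)) :=
            aux_sqrt_ineq _ _ _ ha hb (hdle u) (hdle v)
    · rw [if_neg hpos]
      have : μ u v = 0 := le_antisymm (not_lt.1 hpos) (h0 u v)
      simp [this]
  unfold fuzzySombor fuzzyNirmala
  rw [mul_comm (Δ / Real.sqrt 2), mul_assoc, Finset.sum_mul]
  apply mul_le_mul_of_nonneg_left _ (by norm_num)
  apply Finset.sum_le_sum
  intro u _
  rw [Finset.sum_mul]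
  apply Finset.sum_le_sum
  intro v _
  rw [mul_comm _ (Δ / Real.sqrt 2)]
  exact key u v
end

section
/- Let μ and μ' be two fuzzy graphs on the same finite vertex set V with μ(u,v) ≤ μ'(u,v) for all u, v ∈ V. Then SO^μ(Γ) ≤ SO^{μ'}(Γ'). Moreover, if in addition μ(u₀,v₀) < μ'(u₀,v₀) for some pair of distinct vertices u₀, v₀, then SO^μ(Γ) < SO^{μ'}(Γ'), i.e., increasing any edge membership strictly increases the fuzzy Sombor index. -/
open Finset

variable {V : Type*}

theorem fuzzySombor_mono [Fintype V] (μ μ' : V → V → ℝ)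
    (hΓ : IsFuzzyGraph μ) (hΓ' : IsFuzzyGraph μ')
    (hle : ∀ u v, μ u v ≤ μ' u v) :
    fuzzySombor μ ≤ fuzzySombor μ' ∧
      ∀ u₀ v₀ : V, u₀ ≠ v₀ → μ u₀ v₀ < μ' u₀ v₀ → fuzzySombor μ < fuzzySombor μ' := by
  obtain ⟨h0, h1, hsym, hdiag⟩ := hΓ
  obtain ⟨h0', h1', hsym', hdiag'⟩ := hΓ'
  have hdeg0 : ∀ u, 0 ≤ fuzzyDeg μ u := fun u =>
    Finset.sum_nonneg fun v _ => h0 u v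
  have hdeg0' : ∀ u, 0 ≤ fuzzyDeg μ' u := fun u =>
    Finset.sum_nonneg fun v _ => h0' u v
  have hdeg : ∀ u, fuzzyDeg μ u ≤ fuzzyDeg μ' u := fun u =>
    Finset.sum_le_sum fun v _ => hle u v
  have hsqrt : ∀ u v, Real.sqrt (fuzzyDeg μ u ^ 2 + fuzzyDeg μ v ^ 2) ≤
      Real.sqrt (fuzzyDeg μ' u ^ 2 + fuzzyDeg μ' v ^ 2) := fun u v => by
    apply Real.sqrt_le_sqrt
    gcongr
    · exact hdeg0 u
    · exact hdeg u
    · exact hdeg0 v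
    · exact hdeg v
  have hterm : ∀ u v, μ u v * Real.sqrt (fuzzyDeg μ u ^ 2 + fuzzyDeg μ v ^ 2) ≤
      μ' u v * Real.sqrt (fuzzyDeg μ' u ^ 2 + fuzzyDeg μ' v ^ 2) := fun u v =>
    mul_le_mul (hle u v) (hsqrt u v) (Real.sqrt_nonneg _) (h0' u v)
  constructor
  · apply mul_le_mul_of_nonneg_left _ (by norm_num : (0:ℝ) ≤ 1/2)
    exact Finset.sum_le_sum fun u _ => Finset.sum_le_sum fun v _ => hterm u v
  · intro u₀ v₀ _ hlt
    have hpos : 0 < μ' u₀ v₀ := lt_of_le_of_lt (h0 u₀ v₀) hlt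
    have hdpos : 0 < fuzzyDeg μ' u₀ :=
      lt_of_lt_of_le hpos (Finset.single_le_sum (fun v _ => h0' u₀ v) (Finset.mem_univ v₀))
    have hspos : 0 < Real.sqrt (fuzzyDeg μ' u₀ ^ 2 + fuzzyDeg μ' v₀ ^ 2) := by
      apply Real.sqrt_pos.2
      have : 0 < fuzzyDeg μ' u₀ ^ 2 := pow_pos hdpos 2
      nlinarith [sq_nonneg (fuzzyDeg μ' v₀)]
    have hstrict : μ u₀ v₀ * Real.sqrt (fuzzyDeg μ u₀ ^ 2 + fuzzyDeg μ v₀ ^ 2) <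
        μ' u₀ v₀ * Real.sqrt (fuzzyDeg μ' u₀ ^ 2 + fuzzyDeg μ' v₀ ^ 2) :=
      lt_of_le_of_lt
        (mul_le_mul_of_nonneg_left (hsqrt u₀ v₀) (h0 u₀ v₀))
        (mul_lt_mul_of_pos_right hlt hspos)
    apply mul_lt_mul_of_pos_left _ (by norm_num : (0:ℝ) < 1/2)
    apply Finset.sum_lt_sum (fun u _ => Finset.sum_le_sum fun v _ => hterm u v)
    refine ⟨u₀, Finset.mem_univ u₀, ?_⟩
    apply Finset.sum_lt_sum (fun v _ => hterm u₀ v)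
    exact ⟨v₀, Finset.mem_univ v₀, hstrict⟩
end

section
/- Let n ≥ 3 and η ∈ (0,1]. For the fuzzy path P_n^f on vertices v_1, …, v_n, in which μ(v_i, v_{i+1}) = η for i = 1, …, n−1 and all other edge memberships are 0, the fuzzy Sombor index equals SO^μ(P_n^f) = 2√5 · η² + 2√2 · (n − 3) · η². -/
open Finset

variable {V : Type*}

theorem fuzzySombor_path (n : ℕ) (hn : 3 ≤ n)
    (η : ℝ) (hη : 0 < η) (hη1 : η ≤ 1) (μ : Fin n → Fin n → ℝ)
    (hμ : ∀ i j : Fin n, μ i j = if (i : ℕ) + 1 = (j : ℕ) ∨ (j : ℕ) + 1 = (i : ℕ) then η else 0) :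
    fuzzySombor μ = 2 * Real.sqrt 5 * η ^ 2 + 2 * Real.sqrt 2 * ((n : ℝ) - 3) * η ^ 2 := by
  classical
  set D : ℕ → ℝ := fun k => if k = 0 ∨ k = n - 1 then η else 2*η with hD
  -- degree lemma
  have hdeg : ∀ u : Fin n, fuzzyDeg μ u = D (u : ℕ) := by
    intro u
    have h1 : fuzzyDeg μ u = ∑ j ∈ range n,
        (if (u:ℕ) + 1 = j ∨ j + 1 = (u:ℕ) then η else 0) := by
      rw [fuzzyDeg, ← Fin.sum_univ_eq_sum_range
        (fun j => if (u:ℕ)+1 = j ∨ j+1 = (u:ℕ) then η else 0) n]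
      exact Finset.sum_congr rfl fun v _ => hμ u v
    rw [h1]
    have hsplit : ∀ j ∈ range n, (if (u:ℕ)+1 = j ∨ j+1 = (u:ℕ) then η else 0)
        = (if (u:ℕ)+1 = j then η else 0) + (if j+1 = (u:ℕ) then η else 0) := by
      intro j _
      by_cases hA : (u:ℕ)+1 = j <;> by_cases hB : j+1 = (u:ℕ) <;>
        simp [hA, hB] <;> omega
    rw [Finset.sum_congr rfl hsplit, Finset.sum_add_distrib]
    have e1 : (∑ j ∈ range n, if (u:ℕ)+1 = j then η else 0)
        = if (u:ℕ)+1 ∈ range n then η else 0 :=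
      Finset.sum_ite_eq (range n) ((u:ℕ)+1) (fun _ => η)
    have e2 : (∑ j ∈ range n, if j+1 = (u:ℕ) then η else 0)
        = if (u:ℕ) = 0 then 0 else η := by
      rcases Nat.eq_zero_or_pos (u:ℕ) with h0 | h0
      · rw [h0]; simp
      · obtain ⟨k, hk⟩ : ∃ k, (u:ℕ) = k + 1 := ⟨(u:ℕ) - 1, by omega⟩
        have hkn : k ∈ range n := by
          have := u.isLt; rw [Finset.mem_range]; omega
        rw [Finset.sum_eq_single k
          (fun b _ hb => by rw [if_neg (by omega)])
          (fun h => absurd hkn h)]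
        rw [if_pos (by omega), if_neg (by omega)]
    rw [e1, e2, hD]
    have hu := u.isLt
    simp only [Finset.mem_range]
    split_ifs <;> first | (exfalso; omega) | ring
  -- rewrite the Sombor index as a sum over edges
  set w : ℕ → ℝ := fun i => η * Real.sqrt (D i ^ 2 + D (i+1) ^ 2) with hw
  set A : ℕ → ℕ → ℝ := fun a b =>
    if a + 1 = b then η * Real.sqrt (D a ^ 2 + D b ^ 2) else 0 with hA
  have key : fuzzySombor μ = ∑ i ∈ range (n-1), w i := by
    rw [fuzzySombor]
    have hterm : ∀ u v : Fin n,
        μ u v * Real.sqrt (fuzzyDeg μ u ^ 2 + fuzzyDeg μ v ^ 2)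
        = A (u:ℕ) (v:ℕ) + A (v:ℕ) (u:ℕ) := by
      intro u v
      rw [hμ, hdeg, hdeg, hA]
      simp only
      by_cases h1 : (u:ℕ)+1 = (v:ℕ)
      · rw [if_pos (Or.inl h1), if_pos h1, if_neg (by omega)]
        ring
      · by_cases h2 : (v:ℕ)+1 = (u:ℕ)
        · rw [if_pos (Or.inr h2), if_neg h1, if_pos h2]
          rw [add_comm (D (u:ℕ) ^ 2)]
          ring
        · rw [if_neg (by tauto), if_neg h1, if_neg h2]
          ring
    have hdd : (∑ u : Fin n, ∑ v : Fin n,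
        μ u v * Real.sqrt (fuzzyDeg μ u ^ 2 + fuzzyDeg μ v ^ 2))
        = 2 * ∑ u : Fin n, ∑ v : Fin n, A (u:ℕ) (v:ℕ) := by
      calc (∑ u : Fin n, ∑ v : Fin n,
            μ u v * Real.sqrt (fuzzyDeg μ u ^ 2 + fuzzyDeg μ v ^ 2))
          = ∑ u : Fin n, ∑ v : Fin n, (A (u:ℕ) (v:ℕ) + A (v:ℕ) (u:ℕ)) :=
            Finset.sum_congr rfl fun u _ => Finset.sum_congr rfl fun v _ => hterm u v
        _ = (∑ u : Fin n, ∑ v : Fin n, A (u:ℕ) (v:ℕ))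
            + ∑ u : Fin n, ∑ v : Fin n, A (v:ℕ) (u:ℕ) := by
            simp [Finset.sum_add_distrib]
        _ = 2 * ∑ u : Fin n, ∑ v : Fin n, A (u:ℕ) (v:ℕ) := by
            rw [Finset.sum_comm (s := (univ : Finset (Fin n)))
              (t := (univ : Finset (Fin n)))
              (f := fun u v : Fin n => A (v:ℕ) (u:ℕ))]
            ring
    rw [hdd]
    have hAr : (∑ u : Fin n, ∑ v : Fin n, A (u:ℕ) (v:ℕ))
        = ∑ a ∈ range n, ∑ b ∈ range n, A a b := by
      rw [← Fin.sum_univ_eq_sum_range (fun a => ∑ b ∈ range n, A a b) n]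
      exact Finset.sum_congr rfl fun u _ =>
        Fin.sum_univ_eq_sum_range (fun b => A (u:ℕ) b) n
    rw [hAr]
    have hinner : ∀ a, (∑ b ∈ range n, A a b)
        = if a + 1 ∈ range n then w a else 0 :=
      fun a => Finset.sum_ite_eq (range n) (a+1)
        (fun b => η * Real.sqrt (D a ^ 2 + D b ^ 2))
    rw [Finset.sum_congr rfl fun a _ => hinner a]
    have houter : (∑ a ∈ range n, if a+1 ∈ range n then w a else 0)
        = ∑ a ∈ range (n-1), w a := by
      rw [← Finset.sum_subset (Finset.range_subset_range.mpr (by omega : n-1 ≤ n))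
        (fun x hx hx' => by
          rw [Finset.mem_range] at hx hx'
          rw [if_neg (by rw [Finset.mem_range]; omega)])]
      exact Finset.sum_congr rfl fun a ha => by
        rw [Finset.mem_range] at ha
        exact if_pos (by rw [Finset.mem_range]; omega)
    rw [houter]; ring
  obtain ⟨m, rfl⟩ : ∃ m, n = m + 3 := ⟨n - 3, by omega⟩
  rw [key, show m + 3 - 1 = m + 2 from rfl, Finset.sum_range_succ,
    Finset.sum_range_succ']
  have hD0 : D 0 = η := if_pos (Or.inl rfl)
  have hDlast : D (m + 2) = η := if_pos (Or.inr (by omega))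
  have hDmid : ∀ i, 1 ≤ i → i ≤ m + 1 → D i = 2 * η := by
    intro i h1 h2
    exact if_neg (by omega)
  have h5a : w 0 = Real.sqrt 5 * η ^ 2 := by
    rw [hw]; simp only
    rw [hD0, hDmid 1 (by omega) (by omega),
      show η ^ 2 + (2*η) ^ 2 = 5 * η ^ 2 by ring,
      Real.sqrt_mul (by norm_num), Real.sqrt_sq hη.le]
    ring
  have h5b : w (m+1) = Real.sqrt 5 * η ^ 2 := by
    rw [hw]; simp only
    rw [hDlast, hDmid (m+1) (by omega) (by omega),
      show (2*η) ^ 2 + η ^ 2 = 5 * η ^ 2 by ring,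
      Real.sqrt_mul (by norm_num), Real.sqrt_sq hη.le]
    ring
  have h8 : ∀ i ∈ range m, w (i+1) = 2 * Real.sqrt 2 * η ^ 2 := by
    intro i hi
    rw [Finset.mem_range] at hi
    rw [hw]; simp only
    rw [hDmid (i+1) (by omega) (by omega), hDmid (i+2) (by omega) (by omega),
      show (2*η) ^ 2 + (2*η) ^ 2 = 2 * (2*η) ^ 2 by ring,
      Real.sqrt_mul (by norm_num), Real.sqrt_sq (by positivity)]
    ring
  rw [Finset.sum_congr rfl h8, Finset.sum_const, Finset.card_range, h5a, h5b,
    nsmul_eq_mul]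
  push_cast
  ring
end
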